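/- Every acyclic formula of set theory is stratified. -/

import Mathlib

/-- Alphabet of the usual syntax of set theory. -/
inductive Alph : Type
  | lb | rb | imp | all | deq | mem | w | prime | bot
deriving DecidableEq

/-- Well-formed formulae of set theory; variables are naturals (number of primes). -/
inductive Fm : Type
  | bot : Fm
  | eq : ℕ → ℕ → Fm
  | mem : ℕ → ℕ → Fm
  | imp : Fm → Fm → Fm
  | all : ℕ → Fm → Fm
deriving DecidableEq

/-- The string `w'^n` for the variable with `n` primes. -/
def varStr (n : ℕ) : List Alph := Alph.w :: List.replicate n Alph.prime

/-- The string of symbols of a formula. -/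
def Fm.str : Fm → List Alph
  | .bot => [Alph.bot]
  | .eq x y => varStr x ++ [Alph.deq] ++ varStr y
  | .mem x y => varStr x ++ [Alph.mem] ++ varStr y
  | .imp φ ψ => [Alph.lb] ++ φ.str ++ [Alph.imp] ++ ψ.str ++ [Alph.rb]
  | .all x φ => [Alph.lb, Alph.all] ++ varStr x ++ [Alph.rb] ++ φ.str

/-- Pairs `(x, y)` such that `x ∈ y` occurs as an atomic subformula. -/
def Fm.memPairs : Fm → Finset (ℕ × ℕ)
  | .bot => ∅
  | .eq _ _ => ∅
  | .mem x y => {(x, y)}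
  | .imp φ ψ => φ.memPairs ∪ ψ.memPairs
  | .all _ φ => φ.memPairs

/-- Pairs `(x, y)` such that `x ≐ y` occurs as an atomic subformula. -/
def Fm.eqPairs : Fm → Finset (ℕ × ℕ)
  | .bot => ∅
  | .eq x y => {(x, y)}
  | .mem _ _ => ∅
  | .imp φ ψ => φ.eqPairs ∪ ψ.eqPairs
  | .all _ φ => φ.eqPairs

/-- A formula is stratified if some integer assignment to variables satisfies
`σ x = σ y - 1` for subformulae `x ∈ y` and `σ x = σ y` for subformulae `x ≐ y`. -/
def Fm.Stratified (φ : Fm) : Prop :=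
  ∃ σ : ℕ → ℤ, (∀ p ∈ φ.memPairs, σ p.1 = σ p.2 - 1) ∧ (∀ p ∈ φ.eqPairs, σ p.1 = σ p.2)

/-- Tagged atomic subformulae: `(false, x, y)` for `x ≐ y` and `(true, x, y)` for `x ∈ y`. -/
def Fm.atoms : Fm → Finset (Bool × ℕ × ℕ)
  | .bot => ∅
  | .eq x y => {(false, x, y)}
  | .mem x y => {(true, x, y)}
  | .imp φ ψ => φ.atoms ∪ ψ.atoms
  | .all _ φ => φ.atoms

/-- The number of quantifiers `[∀x]` over the variable `x` occurring in a formula. -/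
def Fm.quantCount (x : ℕ) : Fm → ℕ
  | .bot => 0
  | .eq _ _ => 0
  | .mem _ _ => 0
  | .imp φ ψ => Fm.quantCount x φ + Fm.quantCount x ψ
  | .all y φ => (if y = x then 1 else 0) + Fm.quantCount x φ

/-- The variable `x` has a free occurrence in the formula. -/
def Fm.FreeIn (x : ℕ) : Fm → Prop
  | .bot => False
  | .eq a b => a = x ∨ b = x
  | .mem a b => a = x ∨ b = x
  | .imp φ ψ => Fm.FreeIn x φ ∨ Fm.FreeIn x ψ
  | .all y φ => y ≠ x ∧ Fm.FreeIn x φ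

/-- Variables appearing in a formula (including binders). -/
def Fm.vars : Fm → Finset ℕ
  | .bot => ∅
  | .eq x y => {x, y}
  | .mem x y => {x, y}
  | .imp φ ψ => φ.vars ∪ ψ.vars
  | .all x φ => insert x φ.vars

/-- A formula is acyclic if every variable is either always free or always bound by the
same (unique) quantifier, and there is no cycle of distinct atomic subformulae linking a
sequence of variables `x_0, …, x_n` with `x_0 = x_n`, `n ≥ 1`. -/
def Fm.Acyclic (φ : Fm) : Prop :=
  (∀ x ∈ φ.vars, Fm.quantCount x φ = 0 ∨ (Fm.quantCount x φ = 1 ∧ ¬ Fm.FreeIn x φ)) ∧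
  ¬ ∃ (n : ℕ) (x : Fin (n + 1) → ℕ) (α : Fin n → Bool × ℕ × ℕ),
      1 ≤ n ∧ x 0 = x (Fin.last n) ∧ Function.Injective α ∧
      ∀ i : Fin n, α i ∈ φ.atoms ∧
        ((α i).2 = (x i.castSucc, x i.succ) ∨ (α i).2 = (x i.succ, x i.castSucc))

/-!
The atoms of a formula are the edges of a multigraph on its variables, a membership atom
carrying weight `1` and an equality atom weight `0`, and a stratification is a potential
`σ` with `σ y - σ x` equal to the weight of each edge `x — y`. The absence of cycles of
distinct atoms rules out loops and parallel edges, so this multigraph is a forest. Potentials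
of forests are built one edge at a time: an edge `x — y` of a forest is a bridge, so in the
forest without it the component of `x` does not contain `y`, and shifting `σ` on that
component by a constant satisfies the new edge without disturbing the others.
-/

open SimpleGraph

namespace Fm

theorem mem_memPairs_iff (φ : Fm) (p : ℕ × ℕ) :
    p ∈ φ.memPairs ↔ (true, p) ∈ φ.atoms := by
  induction φ <;> simp_all [Fm.memPairs, Fm.atoms, Prod.ext_iff]

theorem mem_eqPairs_iff (φ : Fm) (p : ℕ × ℕ) :
    p ∈ φ.eqPairs ↔ (false, p) ∈ φ.atoms := by
  induction φ <;> simp_all [Fm.eqPairs, Fm.atoms, Prod.ext_iff]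

end Fm

section

variable {β V : Type*}

def CycleFree (A : Finset (β × V × V)) : Prop :=
  ¬ ∃ (n : ℕ) (x : Fin (n + 1) → V) (α : Fin n → β × V × V),
      1 ≤ n ∧ x 0 = x (Fin.last n) ∧ Function.Injective α ∧
      ∀ i : Fin n, α i ∈ A ∧
        ((α i).2 = (x i.castSucc, x i.succ) ∨ (α i).2 = (x i.succ, x i.castSucc))

def edgeGraph (A : Finset (β × V × V)) : SimpleGraph V :=
  fromEdgeSet ((fun b : β × V × V => s(b.2.1, b.2.2)) '' (A : Set (β × V × V)))

namespace CycleFree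

variable {A B : Finset (β × V × V)}

theorem mono (h : CycleFree B) (hAB : A ⊆ B) : CycleFree A :=
  fun ⟨n, x, α, hn, hx, hα, hmem⟩ =>
    h ⟨n, x, α, hn, hx, hα, fun i => ⟨hAB (hmem i).1, (hmem i).2⟩⟩

theorem fst_ne_snd (h : CycleFree A) {b : β × V × V} (hb : b ∈ A) : b.2.1 ≠ b.2.2 :=
  fun hloop => h ⟨1, fun _ => b.2.1, fun _ => b, le_rfl, rfl,
    fun i j _ => Subsingleton.elim i j, fun _ => ⟨hb, Or.inl (Prod.ext rfl hloop.symm)⟩⟩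

theorem injOn_sym2 (h : CycleFree A) :
    Set.InjOn (fun b : β × V × V => s(b.2.1, b.2.2)) A := by
  intro b hb b' hb' hbb'
  by_contra hne
  refine h ⟨2, ![b.2.1, b.2.2, b.2.1], ![b, b'], by norm_num, rfl, ?_, ?_⟩
  · intro i j hij
    fin_cases i <;> fin_cases j <;> simp_all [eq_comm]
  · intro i
    fin_cases i
    · exact ⟨hb, Or.inl rfl⟩
    · rcases Sym2.mk_eq_mk_iff.mp hbb'.symm with heq | heq
      · exact ⟨hb', Or.inr heq⟩
      · exact ⟨hb', Or.inl heq⟩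

theorem adj (h : CycleFree A) {b : β × V × V} (hb : b ∈ A) :
    (edgeGraph A).Adj b.2.1 b.2.2 :=
  (fromEdgeSet_adj _).mpr ⟨⟨b, hb, rfl⟩, h.fst_ne_snd hb⟩

theorem isAcyclic (h : CycleFree A) : (edgeGraph A).IsAcyclic := by
  intro v c hc
  have hatom : ∀ i : Fin c.length, ∃ b : β × V × V,
      b ∈ A ∧ s(b.2.1, b.2.2) = s(c.getVert i, c.getVert (i + 1)) :=
    fun i => ((fromEdgeSet_adj _).mp (c.adj_getVert_succ i.2)).1
  choose α hαA hαe using hatom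
  refine h ⟨c.length, fun i => c.getVert i, α, ?_, by simp, ?_, fun i => ⟨hαA i, ?_⟩⟩
  · have := hc.three_le_length
    omega
  · intro i j hij
    have hedges : c.edges[i.val]'(by simp) = c.edges[j.val]'(by simp) := by
      rw [Walk.getElem_edges, Walk.getElem_edges, ← hαe, ← hαe, hij]
    exact Fin.ext (hc.edges_nodup.getElem_inj_iff.mp hedges)
  · exact Sym2.mk_eq_mk_iff.mp (hαe i)

theorem not_reachable_of_insert [DecidableEq β] [DecidableEq V] {a : β × V × V}
    (h : CycleFree (insert a A)) (ha : a ∉ A) : ¬ (edgeGraph A).Reachable a.2.1 a.2.2 := by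
  have hbridge := isAcyclic_iff_forall_adj_isBridge.mp h.isAcyclic
    (h.adj (Finset.mem_insert_self a A))
  refine fun hreach => isBridge_iff.mp hbridge (hreach.mono fun u v huv => ?_)
  obtain ⟨⟨b, hb, hbe⟩, hne⟩ := (fromEdgeSet_adj _).mp huv
  have hb' : b ∈ insert a A := Finset.mem_insert_of_mem hb
  refine deleteEdges_adj.mpr ⟨(fromEdgeSet_adj _).mpr ⟨⟨b, hb', hbe⟩, hne⟩, fun hba => ?_⟩
  rw [Set.mem_singleton_iff, ← hbe] at hba
  exact ha (h.injOn_sym2 hb' (Finset.mem_insert_self a A) hba ▸ hb)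

theorem exists_potential {G : Type*} [AddCommGroup G] (w : β → G) (h : CycleFree A) :
    ∃ σ : V → G, ∀ b ∈ A, σ b.2.1 = σ b.2.2 - w b.1 := by
  classical
  induction A using Finset.induction_on with
  | empty => exact ⟨0, by simp⟩
  | insert a A ha ih =>
    obtain ⟨σ, hσ⟩ := ih (h.mono (Finset.subset_insert a A))
    let R := (edgeGraph A).Reachable a.2.1
    refine ⟨fun v => if R v then σ v + (σ a.2.2 - w a.1 - σ a.2.1) else σ v, fun b hb => ?_⟩
    rcases Finset.mem_insert.mp hb with rfl | hb
    · simp [R, h.not_reachable_of_insert ha]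
    · have hadj := (h.mono (Finset.subset_insert a A)).adj hb
      have hR : R b.2.1 ↔ R b.2.2 :=
        ⟨fun r => r.trans hadj.reachable, fun r => r.trans hadj.symm.reachable⟩
      by_cases hR1 : R b.2.1
      · simp only [hR1, hR.mp hR1, ↓reduceIte, hσ b hb]
        abel
      · simp [hR1, hR.not.mp hR1, hσ b hb]

end CycleFree

end

/-- Every acyclic formula of set theory is stratified. -/
theorem acyclic_stratified (φ : Fm) (h : φ.Acyclic) : φ.Stratified := by
  obtain ⟨σ, hσ⟩ := CycleFree.exists_potential (fun t : Bool => (t.toNat : ℤ)) h.2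
  exact ⟨σ, fun p hp => by simpa using hσ (true, p) ((φ.mem_memPairs_iff p).mp hp),
    fun p hp => by simpa using hσ (false, p) ((φ.mem_eqPairs_iff p).mp hp)⟩
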